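/- Let k be a field, s ≥ 1, f_1,…,f_s ∈ k[X_0,X_1,…,X_s], p ∈ k, and ξ = (ξ_1,…,ξ_s) ∈ k^s such that f_i(p,ξ) = 0 for 1 ≤ i ≤ s and det((∂f_i/∂X_j)(p,ξ))_{1≤i,j≤s} ≠ 0, where the partial derivatives are with respect to X_1,…,X_s. Then there exists a unique s-tuple R = (R_1,…,R_s) of formal power series in k⟦t⟧ such that f_i(p+t, R) = 0 in k⟦t⟧ for every 1 ≤ i ≤ s and the constant term of R_m equals ξ_m for every 1 ≤ m ≤ s. -/

import Mathlib

noncomputable section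

open MvPolynomial

variable {k : Type*}

/-- Substitution `X₀ ↦ p + t`, `X_m ↦ R m` of a polynomial `f ∈ k[X₀, X₁, …, X_s]` into the
power series ring `k⟦t⟧`. -/
def psSubst [Field k] {s : ℕ} (p : k) (R : Fin s → PowerSeries k)
    (f : MvPolynomial (Fin (s + 1)) k) : PowerSeries k :=
  aeval (fun v : Fin (s + 1) =>
    Fin.cases (PowerSeries.C p + PowerSeries.X) R v) f

/-!
Write `Φ(R) = (f_i(p + t, R))_i` and `J` for the Jacobian matrix at `(p, ξ)`. A first-order
Taylor expansion shows that if `R ≡ R' mod t^(n+1)` and `R'` has constant term `ξ`, then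
`Φ(R) ≡ Φ(R') mod t^(n+1)` and the coefficients of `t^(n+1)` satisfy
`[t^(n+1)] (Φ(R) - Φ(R')) = J · [t^(n+1)] (R - R')`.
As `J` is invertible, two solutions that agree modulo `t^(n+1)` agree modulo `t^(n+2)`, which gives
uniqueness. For existence, Newton's correction `R ↦ R - J⁻¹ [t^(n+1)] Φ(R) · t^(n+1)` turns a
solution modulo `t^(n+1)` into one modulo `t^(n+2)`, and the coefficientwise limit of these
approximations is a solution.
-/

open scoped PowerSeries Matrix

namespace MvPolynomial

variable {R A σ : Type*} [CommRing R] [CommRing A] [Algebra R A]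

theorem dvd_aeval_sub_aeval (f : MvPolynomial σ R) {a b : σ → A} {x : A}
    (h : ∀ j, x ∣ a j - b j) : x ∣ aeval a f - aeval b f := by
  let π := Ideal.Quotient.mkₐ R (Ideal.span {x})
  have hab : (fun j => π (a j)) = fun j => π (b j) := by
    ext j
    exact Ideal.Quotient.eq.mpr (Ideal.mem_span_singleton.mpr (h j))
  rw [← Ideal.mem_span_singleton, ← Ideal.Quotient.eq, ← Ideal.Quotient.mkₐ_eq_mk R,
    comp_aeval_apply, comp_aeval_apply, hab]

theorem sq_dvd_aeval_add_sub_aeval_sub_sum_pderiv [Fintype σ] (f : MvPolynomial σ R)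
    (a b : σ → A) {x : A} (hb : ∀ j, x ∣ b j) :
    x ^ 2 ∣ aeval (a + b) f - aeval a f - ∑ j, aeval a (pderiv j f) * b j := by
  classical
  induction f using MvPolynomial.induction_on with
  | C r => simp
  | add f g hf hg =>
    convert dvd_add hf hg using 1
    simp only [map_add, Finset.sum_add_distrib, add_mul]
    ring
  | mul_X f i hf =>
    have hlin : ∑ j, aeval a (pderiv j (f * X i)) * b j
        = (∑ j, aeval a (pderiv j f) * b j) * a i + aeval a f * b i := by
      simp only [pderiv_mul, pderiv_X, map_add, map_mul, aeval_X, add_mul, Finset.sum_add_distrib,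
        Finset.sum_mul]
      simp [Pi.single_apply, mul_right_comm]
    have hx : x ∣ ∑ j, aeval a (pderiv j f) * b j := Finset.dvd_sum fun j _ => (hb j).mul_left _
    -- remainder of `f * X i` = (remainder of `f`) * (a i + b i) + (linear part of `f`) * b i
    rw [hlin]
    convert dvd_add (hf.mul_right (a i + b i)) (pow_two x ▸ mul_dvd_mul hx (hb i)) using 1
    simp only [map_mul, aeval_X, Pi.add_apply]
    ring

end MvPolynomial

namespace PowerSeries

variable {R σ : Type*} [CommRing R]

theorem coeff_succ_mul_of_X_pow_succ_dvd (u : R⟦X⟧) {d : R⟦X⟧} {n : ℕ}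
    (h : X ^ (n + 1) ∣ d) : coeff (n + 1) (u * d) = constantCoeff u * coeff (n + 1) d := by
  obtain ⟨e, rfl⟩ := h
  rw [mul_left_comm, coeff_X_pow_mul', coeff_X_pow_mul', if_pos le_rfl, if_pos le_rfl,
    Nat.sub_self, coeff_zero_eq_constantCoeff_apply, coeff_zero_eq_constantCoeff_apply, map_mul]

theorem constantCoeff_aeval (b : σ → R⟦X⟧) (g : MvPolynomial σ R) :
    constantCoeff (MvPolynomial.aeval b g) = eval (fun j => constantCoeff (b j)) g := by
  have : constantCoeff.comp (algebraMap R R⟦X⟧) = RingHom.id R := by ext; simp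
  rw [map_aeval, this]
  rfl

theorem X_pow_succ_succ_dvd_of_coeff_eq_zero {φ : R⟦X⟧} {n : ℕ} (h : X ^ (n + 1) ∣ φ)
    (h' : coeff (n + 1) φ = 0) : X ^ (n + 2) ∣ φ := by
  rw [X_pow_dvd_iff] at h ⊢
  intro m hm
  rcases Nat.lt_succ_iff_lt_or_eq.mp hm with hm | rfl
  exacts [h m hm, h']

theorem eq_zero_of_forall_X_pow_dvd {φ : R⟦X⟧} (h : ∀ n, X ^ (n + 1) ∣ φ) : φ = 0 := by
  ext n
  simpa using X_pow_dvd_iff.mp (h n) n n.lt_succ_self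

theorem coeff_succ_aeval_sub_aeval [Fintype σ] (g : MvPolynomial σ R) {a b : σ → R⟦X⟧}
    {n : ℕ} (h : ∀ j, X ^ (n + 1) ∣ a j - b j) :
    coeff (n + 1) (MvPolynomial.aeval a g) - coeff (n + 1) (MvPolynomial.aeval b g) =
      ∑ j, eval (fun j => constantCoeff (b j)) (MvPolynomial.pderiv j g) *
        (coeff (n + 1) (a j) - coeff (n + 1) (b j)) := by
  have htaylor := sq_dvd_aeval_add_sub_aeval_sub_sum_pderiv g b (a - b) h
  rw [add_sub_cancel, ← pow_mul] at htaylor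
  have hrem := X_pow_dvd_iff.mp htaylor (n + 1) (by omega)
  simp only [map_sub, map_sum, Pi.sub_apply] at hrem
  simp only [coeff_succ_mul_of_X_pow_succ_dvd _ (h _), constantCoeff_aeval, map_sub] at hrem
  linear_combination hrem

end PowerSeries

section psSubst

variable [Field k] {s : ℕ}

def jacobian (f : Fin s → MvPolynomial (Fin (s + 1)) k) (p : k) (ξ : Fin s → k) :
    Matrix (Fin s) (Fin s) k :=
  Matrix.of fun i m => eval (Fin.cases p ξ) (pderiv m.succ (f i))

theorem dvd_psSubst_sub_psSubst (p : k) (g : MvPolynomial (Fin (s + 1)) k)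
    {R R' : Fin s → k⟦X⟧} {x : k⟦X⟧} (h : ∀ m, x ∣ R m - R' m) :
    x ∣ psSubst p R g - psSubst p R' g :=
  dvd_aeval_sub_aeval g fun v => by cases v using Fin.cases <;> simp [h]

theorem constantCoeff_psSubst (p : k) (R : Fin s → k⟦X⟧) (g : MvPolynomial (Fin (s + 1)) k) :
    PowerSeries.constantCoeff (psSubst p R g) =
      eval (Fin.cases p fun m => PowerSeries.constantCoeff (R m)) g := by
  rw [psSubst, PowerSeries.constantCoeff_aeval]
  congr 2
  funext v
  cases v using Fin.cases <;> simp

theorem coeff_psSubst_sub_psSubst (f : Fin s → MvPolynomial (Fin (s + 1)) k) (p : k)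
    {ξ : Fin s → k} {R R' : Fin s → k⟦X⟧} {n : ℕ}
    (h : ∀ m, PowerSeries.X ^ (n + 1) ∣ R m - R' m)
    (hξ : ∀ m, PowerSeries.constantCoeff (R' m) = ξ m) :
    (fun i => PowerSeries.coeff (n + 1) (psSubst p R (f i)) -
        PowerSeries.coeff (n + 1) (psSubst p R' (f i))) =
      jacobian f p ξ *ᵥ
        fun m => PowerSeries.coeff (n + 1) (R m) - PowerSeries.coeff (n + 1) (R' m) := by
  have hcases : (fun v => PowerSeries.constantCoeff
      (Fin.cases (PowerSeries.C p + PowerSeries.X) R' v : k⟦X⟧)) = Fin.cases p ξ := by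
    ext v; cases v using Fin.cases <;> simp [hξ]
  ext i
  rw [psSubst, psSubst,
    PowerSeries.coeff_succ_aeval_sub_aeval _ fun v => by cases v using Fin.cases <;> simp [h],
    Fin.sum_univ_succ, hcases]
  simp [jacobian, Matrix.mulVec, dotProduct]

theorem eq_of_psSubst_eq_zero (f : Fin s → MvPolynomial (Fin (s + 1)) k) (p : k)
    {ξ : Fin s → k} (hjac : (jacobian f p ξ).det ≠ 0) {R R' : Fin s → k⟦X⟧}
    (hR : ∀ i, psSubst p R (f i) = 0) (hR' : ∀ i, psSubst p R' (f i) = 0)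
    (hRξ : ∀ m, PowerSeries.constantCoeff (R m) = ξ m)
    (hR'ξ : ∀ m, PowerSeries.constantCoeff (R' m) = ξ m) : R = R' := by
  have hdvd : ∀ n m, PowerSeries.X ^ (n + 1) ∣ R m - R' m := by
    intro n
    induction n with
    | zero =>
      intro m
      rw [zero_add, pow_one, PowerSeries.X_dvd_iff, map_sub, hRξ, hR'ξ, sub_self]
    | succ n ih =>
      have hlin := coeff_psSubst_sub_psSubst f p ih hR'ξ
      simp only [hR, hR', map_zero, sub_self] at hlin
      have hcoeff := Matrix.eq_zero_of_mulVec_eq_zero hjac hlin.symm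
      intro m
      refine PowerSeries.X_pow_succ_succ_dvd_of_coeff_eq_zero (ih m) ?_
      simpa using congrFun hcoeff m
  funext m
  exact sub_eq_zero.mp (PowerSeries.eq_zero_of_forall_X_pow_dvd fun n => hdvd n m)

section Newton

variable (f : Fin s → MvPolynomial (Fin (s + 1)) k) (p : k) (ξ : Fin s → k)

/-- Newton's iteration: `newtonApprox f p ξ n` solves the system modulo `t ^ (n + 1)`. -/
def newtonApprox : ℕ → Fin s → k⟦X⟧
  | 0 => fun m => PowerSeries.C (ξ m)
  | n + 1 =>
    let δ := -(jacobian f p ξ)⁻¹ *ᵥ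
      fun i => PowerSeries.coeff (n + 1) (psSubst p (newtonApprox n) (f i))
    fun m => newtonApprox n m + PowerSeries.C (δ m) * PowerSeries.X ^ (n + 1)

def newtonLimit : Fin s → k⟦X⟧ :=
  fun m => PowerSeries.mk fun n => PowerSeries.coeff n (newtonApprox f p ξ n m)

theorem X_pow_dvd_newtonApprox_sub {n n' : ℕ} (h : n ≤ n') (m : Fin s) :
    PowerSeries.X ^ (n + 1) ∣ newtonApprox f p ξ n' m - newtonApprox f p ξ n m := by
  induction n', h using Nat.le_induction with
  | base => simp
  | succ n' hn ih =>
    rw [newtonApprox, add_sub_right_comm]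
    exact dvd_add ih ((pow_dvd_pow _ (by omega)).trans (dvd_mul_left _ _))

theorem constantCoeff_newtonApprox (n : ℕ) (m : Fin s) :
    PowerSeries.constantCoeff (newtonApprox f p ξ n m) = ξ m := by
  have h := X_pow_dvd_newtonApprox_sub f p ξ n.zero_le m
  rw [zero_add, pow_one, PowerSeries.X_dvd_iff, map_sub, sub_eq_zero] at h
  simp [h, newtonApprox]

theorem coeff_newtonApprox_succ_sub (n : ℕ) :
    (fun m => PowerSeries.coeff (n + 1) (newtonApprox f p ξ (n + 1) m) -
        PowerSeries.coeff (n + 1) (newtonApprox f p ξ n m)) =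
      -(jacobian f p ξ)⁻¹ *ᵥ
        fun i => PowerSeries.coeff (n + 1) (psSubst p (newtonApprox f p ξ n) (f i)) := by
  funext m
  simp [newtonApprox]

theorem X_pow_dvd_newtonLimit_sub (n : ℕ) (m : Fin s) :
    PowerSeries.X ^ (n + 1) ∣ newtonLimit f p ξ m - newtonApprox f p ξ n m := by
  refine PowerSeries.X_pow_dvd_iff.mpr fun j hj => ?_
  have h := PowerSeries.X_pow_dvd_iff.mp
    (X_pow_dvd_newtonApprox_sub f p ξ (Nat.lt_succ_iff.mp hj) m) j j.lt_succ_self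
  rw [map_sub, sub_eq_zero] at h ⊢
  rw [newtonLimit, PowerSeries.coeff_mk, h]

theorem constantCoeff_newtonLimit (m : Fin s) :
    PowerSeries.constantCoeff (newtonLimit f p ξ m) = ξ m := by
  rw [← PowerSeries.coeff_zero_eq_constantCoeff_apply, newtonLimit, PowerSeries.coeff_mk,
    PowerSeries.coeff_zero_eq_constantCoeff_apply, constantCoeff_newtonApprox f p ξ]

variable {f p ξ}

theorem X_pow_dvd_psSubst_newtonApprox (hzero : ∀ i, eval (Fin.cases p ξ) (f i) = 0)
    (hjac : (jacobian f p ξ).det ≠ 0) (n : ℕ) :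
    ∀ i, PowerSeries.X ^ (n + 1) ∣ psSubst p (newtonApprox f p ξ n) (f i) := by
  induction n with
  | zero =>
    intro i
    rw [zero_add, pow_one, PowerSeries.X_dvd_iff, constantCoeff_psSubst]
    simpa [constantCoeff_newtonApprox f p ξ] using hzero i
  | succ n ih =>
    intro i
    have hstep := X_pow_dvd_newtonApprox_sub f p ξ n.le_succ
    have hlow := dvd_add (dvd_psSubst_sub_psSubst p (f i) hstep) (ih i)
    rw [sub_add_cancel] at hlow
    refine PowerSeries.X_pow_succ_succ_dvd_of_coeff_eq_zero hlow ?_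
    have hlin := coeff_psSubst_sub_psSubst f p hstep (constantCoeff_newtonApprox f p ξ n)
    rw [coeff_newtonApprox_succ_sub f p ξ, Matrix.mulVec_mulVec, Matrix.mul_neg,
      Matrix.mul_nonsing_inv _ (isUnit_iff_ne_zero.mpr hjac), Matrix.neg_mulVec,
      Matrix.one_mulVec] at hlin
    simpa using congrFun hlin i

theorem psSubst_newtonLimit (hzero : ∀ i, eval (Fin.cases p ξ) (f i) = 0)
    (hjac : (jacobian f p ξ).det ≠ 0) (i : Fin s) :
    psSubst p (newtonLimit f p ξ) (f i) = 0 :=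
  PowerSeries.eq_zero_of_forall_X_pow_dvd fun n => by
    simpa using dvd_add (dvd_psSubst_sub_psSubst p (f i) (X_pow_dvd_newtonLimit_sub f p ξ n))
      (X_pow_dvd_psSubst_newtonApprox hzero hjac n i)

end Newton

end psSubst

theorem statement12_general [Field k] {s : ℕ}
    (f : Fin s → MvPolynomial (Fin (s + 1)) k) (p : k) (ξ : Fin s → k)
    (hzero : ∀ i : Fin s, eval (fun v : Fin (s + 1) => Fin.cases p ξ v) (f i) = 0)
    (hjac : (Matrix.of fun i m : Fin s =>
      eval (fun v : Fin (s + 1) => Fin.cases p ξ v) (pderiv (Fin.succ m) (f i))).det ≠ 0) :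
    ∃! R : Fin s → PowerSeries k,
      (∀ i : Fin s, psSubst p R (f i) = 0) ∧
      (∀ m : Fin s, PowerSeries.constantCoeff (R m) = ξ m) :=
  ⟨newtonLimit f p ξ, ⟨psSubst_newtonLimit hzero hjac, constantCoeff_newtonLimit f p ξ⟩,
    fun _ ⟨hR, hRξ⟩ => eq_of_psSubst_eq_zero f p hjac hR (psSubst_newtonLimit hzero hjac) hRξ
      (constantCoeff_newtonLimit f p ξ)⟩

/-- Newton–Hensel lemma.  If `f(p, ξ) = 0` and the Jacobian determinant of
`f` with respect to `X₁,…,X_s` does not vanish at `(p, ξ)`, then there is a unique tuple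
`R ∈ k⟦t⟧^s` of power series with `f(p+t, R) = 0` and constant term `ξ`. -/
theorem statement12 [Field k] {s : ℕ} (hs : 1 ≤ s)
    (f : Fin s → MvPolynomial (Fin (s + 1)) k) (p : k) (ξ : Fin s → k)
    (hzero : ∀ i : Fin s, eval (fun v : Fin (s + 1) => Fin.cases p ξ v) (f i) = 0)
    (hjac : (Matrix.of fun i m : Fin s =>
      eval (fun v : Fin (s + 1) => Fin.cases p ξ v) (pderiv (Fin.succ m) (f i))).det ≠ 0) :
    ∃! R : Fin s → PowerSeries k,
      (∀ i : Fin s, psSubst p R (f i) = 0) ∧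
      (∀ m : Fin s, PowerSeries.constantCoeff (R m) = ξ m) :=
  statement12_general f p ξ hzero hjac
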